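/- arXiv:1807.08180 — 4 statements merged into one kernel-verified Lean document; each statement's English description precedes it below -/
import Mathlib

section
/- Let g be a smooth pseudo-Riemannian metric on ℝⁿ, let Y be a smooth vector field, and set h_{αβ} = Y^γ ∂_γ g_{αβ} + g_{γβ} ∂_α Y^γ + g_{αγ} ∂_β Y^γ (the Lie derivative of g along Y). Assume h is covariantly constant (∇h = 0). Then along any affinely parametrized geodesic u of g, the quantity Q₂(s) = g_{αβ}(u(s)) Y^α(u(s)) u̇^β(s) − (s/2) h_{αβ}(u(s)) u̇^α(s) u̇^β(s) is constant. -/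
open scoped BigOperators ContDiff

noncomputable section

variable {ι : Type*}

/-- Partial derivative of `f` in the `i`-th coordinate direction at `x`. -/
def pd [Fintype ι] [DecidableEq ι] (f : (ι → ℝ) → ℝ) (i : ι) (x : ι → ℝ) : ℝ :=
  fderiv ℝ f x (Pi.single i 1)

/-- Christoffel symbols `Γ^a_{bc}` of the metric `g` with inverse `ginv`. -/
def Γ [Fintype ι] [DecidableEq ι] (ginv g : (ι → ℝ) → ι → ι → ℝ) (a b c : ι)
    (x : ι → ℝ) : ℝ :=
  (1/2) * ∑ d, ginv x a d *
    (pd (fun y => g y d c) b x + pd (fun y => g y d b) c x - pd (fun y => g y b c) d x)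

/-- Velocity components of a curve. -/
def vel (u : ℝ → ι → ℝ) (a : ι) (s : ℝ) : ℝ := deriv (fun t => u t a) s

/-- The affinely parametrized geodesic equation `ü^a + Γ^a_{bc}(u) u̇^b u̇^c = 0`. -/
def IsGeodesic [Fintype ι] [DecidableEq ι] (ginv g : (ι → ℝ) → ι → ι → ℝ)
    (u : ℝ → ι → ℝ) : Prop :=
  ∀ s a, deriv (vel u a) s + ∑ b, ∑ c, Γ ginv g a b c (u s) * vel u b s * vel u c s = 0

/-- Components of the Lie derivative of the metric,
`(L_Y g)_{ab} = Y^c ∂_c g_{ab} + g_{cb} ∂_a Y^c + g_{ac} ∂_b Y^c`. -/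
def LieG [Fintype ι] [DecidableEq ι] (g : (ι → ℝ) → ι → ι → ℝ) (Y : (ι → ℝ) → ι → ℝ)
    (x : ι → ℝ) (a b : ι) : ℝ :=
  (∑ c, Y x c * pd (fun y => g y a b) c x) + (∑ c, g x c b * pd (fun y => Y y c) a x) +
    (∑ c, g x a c * pd (fun y => Y y c) b x)

/-- Components of the Lie derivative of the Christoffel symbols along `Y`:
`(L_Y Γ)^c_{ab} = Y^d ∂_d Γ^c_{ab} − Γ^d_{ab} ∂_d Y^c + Γ^c_{db} ∂_a Y^d
  + Γ^c_{ad} ∂_b Y^d + ∂_a ∂_b Y^c`. -/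
def LieΓ [Fintype ι] [DecidableEq ι] (ginv g : (ι → ℝ) → ι → ι → ℝ)
    (Y : (ι → ℝ) → ι → ℝ) (c a b : ι) (x : ι → ℝ) : ℝ :=
  (∑ d, Y x d * pd (Γ ginv g c a b) d x) - (∑ d, Γ ginv g d a b x * pd (fun y => Y y c) d x)
    + (∑ d, Γ ginv g c d b x * pd (fun y => Y y d) a x)
    + (∑ d, Γ ginv g c a d x * pd (fun y => Y y d) b x)
    + pd (fun y => pd (fun z => Y z c) b y) a x

/-- Covariant derivative of a vector field, `∇_b Y^c`. -/
def covD [Fintype ι] [DecidableEq ι] (ginv g : (ι → ℝ) → ι → ι → ℝ)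
    (Y : (ι → ℝ) → ι → ℝ) (b c : ι) (x : ι → ℝ) : ℝ :=
  pd (fun y => Y y c) b x + ∑ d, Γ ginv g c b d x * Y x d

/-- Second covariant derivative of a vector field, `∇_a ∇_b Y^c`. -/
def covD2 [Fintype ι] [DecidableEq ι] (ginv g : (ι → ℝ) → ι → ι → ℝ)
    (Y : (ι → ℝ) → ι → ℝ) (a b c : ι) (x : ι → ℝ) : ℝ :=
  pd (covD ginv g Y b c) a x + (∑ d, Γ ginv g c a d x * covD ginv g Y b d x)
    - ∑ d, Γ ginv g d a b x * covD ginv g Y d c x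

/-- Riemann curvature `R^c{}_{bad}` defined from the Christoffel symbols in the usual way,
so that `∇_a ∇_b Y^c = R^c{}_{bad} Y^d` is the affine-vector-field equation. -/
def Riem [Fintype ι] [DecidableEq ι] (ginv g : (ι → ℝ) → ι → ι → ℝ) (c b a d : ι)
    (x : ι → ℝ) : ℝ :=
  pd (Γ ginv g c d b) a x - pd (Γ ginv g c a b) d x
    + ∑ e, (Γ ginv g c a e x * Γ ginv g e d b x - Γ ginv g c d e x * Γ ginv g e a b x)

section Helpers
variable {n : ℕ}

lemma sum_swap13 (F : Fin n → Fin n → Fin n → ℝ) :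
    ∑ a, ∑ b, ∑ c, F a b c = ∑ c, ∑ b, ∑ a, F a b c := by
  rw [Finset.sum_comm]
  refine (Finset.sum_congr rfl fun b _ => Finset.sum_comm).trans ?_
  exact Finset.sum_comm

lemma sum_swap23 (F : Fin n → Fin n → Fin n → ℝ) :
    ∑ a, ∑ b, ∑ c, F a b c = ∑ a, ∑ c, ∑ b, F a b c :=
  Finset.sum_congr rfl fun _ _ => Finset.sum_comm

lemma sum_rot2 (F : Fin n → Fin n → Fin n → ℝ) :
    ∑ a, ∑ b, ∑ c, F a b c = ∑ b, ∑ c, ∑ a, F a b c :=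
  (sum_swap13 F).trans Finset.sum_comm

lemma sum_swap14 (F : Fin n → Fin n → Fin n → Fin n → ℝ) :
    ∑ a, ∑ b, ∑ c, ∑ d, F a b c d = ∑ d, ∑ b, ∑ c, ∑ a, F a b c d := by
  rw [Finset.sum_comm]
  refine (Finset.sum_congr rfl fun b _ => sum_swap13 _).trans ?_
  exact Finset.sum_comm

lemma sum_swap24 (F : Fin n → Fin n → Fin n → Fin n → ℝ) :
    ∑ a, ∑ b, ∑ c, ∑ d, F a b c d = ∑ a, ∑ d, ∑ c, ∑ b, F a b c d :=
  Finset.sum_congr rfl fun _ _ => sum_swap13 _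

lemma contract (gv Gi : Fin n → Fin n → ℝ)
    (hinv : ∀ a b, ∑ c, gv a c * Gi c b = if a = b then (1:ℝ) else 0)
    (T : Fin n → ℝ) (a : Fin n) :
    ∑ b, gv a b * ((1/2) * ∑ d, Gi b d * T d) = (1/2) * T a := by
  have h1 : ∀ b, gv a b * ((1/2) * ∑ d, Gi b d * T d)
      = ∑ d, (1/2) * (gv a b * Gi b d * T d) := by
    intro b
    rw [Finset.mul_sum, Finset.mul_sum]
    exact Finset.sum_congr rfl fun d _ => by ring
  simp only [h1]
  rw [Finset.sum_comm]
  have h2 : ∀ d, ∑ b, (1/2) * (gv a b * Gi b d * T d)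
      = (1/2) * ((∑ b, gv a b * Gi b d) * T d) := by
    intro d
    rw [Finset.sum_mul, Finset.mul_sum]
  simp only [h2, hinv]
  rw [Finset.sum_eq_single a]
  · simp
  · intro b _ hb; simp [Ne.symm hb]
  · intro h; exact absurd (Finset.mem_univ a) h

lemma LA_alg (gv Gi : Fin n → Fin n → ℝ) (Gm : Fin n → Fin n → Fin n → ℝ)
    (dg : Fin n → Fin n → Fin n → ℝ) (Yv : Fin n → ℝ) (dY : Fin n → Fin n → ℝ)
    (v w : Fin n → ℝ) (H : Fin n → Fin n → ℝ)
    (hsym : ∀ a b, gv a b = gv b a)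
    (hinv : ∀ a b, ∑ c, gv a c * Gi c b = if a = b then (1:ℝ) else 0)
    (hGm : ∀ a b c, Gm a b c = (1/2) * ∑ d, Gi a d * (dg b d c + dg c d b - dg d b c))
    (hw : ∀ a, w a = - ∑ p, ∑ q, Gm a p q * v p * v q)
    (hH : ∀ a b, H a b = (∑ c, Yv c * dg c a b) + (∑ c, gv c b * dY a c)
      + (∑ c, gv a c * dY b c)) :
    ∑ a, ∑ b, (((∑ c, dg c a b * v c) * Yv a + gv a b * (∑ c, dY c a * v c)) * v b
        + (gv a b * Yv a) * w b)
      = (1/2) * (∑ a, ∑ b, H a b * v a * v b) := by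
  have hcontract : ∀ a p q, ∑ b, gv a b * Gm b p q
      = (1/2) * (dg p a q + dg q a p - dg a p q) := by
    intro a p q
    simp only [hGm]
    exact contract gv Gi hinv _ a
  have e1 : ∀ a b : Fin n, ((∑ c, dg c a b * v c) * Yv a + gv a b * (∑ c, dY c a * v c)) * v b
        + (gv a b * Yv a) * w b
      = (∑ c, Yv a * dg c a b * v c * v b) + (∑ c, gv a b * dY c a * v c * v b)
        + gv a b * Yv a * w b := by
    intro a b
    have t1 : (∑ c, dg c a b * v c) * Yv a * v b = ∑ c, Yv a * dg c a b * v c * v b := by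
      rw [Finset.sum_mul, Finset.sum_mul]
      exact Finset.sum_congr rfl fun c _ => by ring
    have t2 : gv a b * (∑ c, dY c a * v c) * v b = ∑ c, gv a b * dY c a * v c * v b := by
      rw [Finset.mul_sum, Finset.sum_mul]
      exact Finset.sum_congr rfl fun c _ => by ring
    rw [← t1, ← t2]; ring
  simp only [e1, Finset.sum_add_distrib]
  have hG1 : ∑ a, ∑ b, ∑ c, Yv a * dg c a b * v c * v b
      = ∑ a, ∑ p, ∑ q, Yv a * dg p a q * v p * v q := by
    refine (Finset.sum_congr rfl fun a _ => Finset.sum_comm).trans ?_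
    exact Finset.sum_congr rfl fun a _ => Finset.sum_congr rfl fun p _ =>
      Finset.sum_congr rfl fun q _ => by ring
  have hG3 : ∑ a, ∑ b, gv a b * Yv a * w b
      = -(∑ a, ∑ p, ∑ q, Yv a * dg p a q * v p * v q)
        + (1/2) * (∑ a, ∑ p, ∑ q, Yv a * dg a p q * v p * v q) := by
    have e3 : ∀ a b : Fin n, gv a b * Yv a * w b
        = - ∑ p, ∑ q, Yv a * (gv a b * Gm b p q) * v p * v q := by
      intro a b
      rw [hw, mul_neg, neg_inj, Finset.mul_sum]
      refine Finset.sum_congr rfl fun p _ => ?_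
      rw [Finset.mul_sum]
      exact Finset.sum_congr rfl fun q _ => by ring
    simp only [e3, Finset.sum_neg_distrib]
    have hquad : ∀ a : Fin n, ∑ b, ∑ p, ∑ q, Yv a * (gv a b * Gm b p q) * v p * v q
        = ∑ p, ∑ q, ((1/2) * (Yv a * dg p a q * v p * v q)
            + (1/2) * (Yv a * dg q a p * v p * v q)
            - (1/2) * (Yv a * dg a p q * v p * v q)) := by
      intro a
      rw [sum_rot2 (fun b p q => Yv a * (gv a b * Gm b p q) * v p * v q)]
      refine Finset.sum_congr rfl fun p _ => Finset.sum_congr rfl fun q _ => ?_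
      have t3 : ∑ b, Yv a * (gv a b * Gm b p q) * v p * v q
          = (∑ b, gv a b * Gm b p q) * (Yv a * (v p * v q)) := by
        rw [Finset.sum_mul]
        exact Finset.sum_congr rfl fun b _ => by ring
      rw [t3, hcontract]; ring
    simp only [hquad, Finset.sum_add_distrib, Finset.sum_sub_distrib,
      ← Finset.mul_sum]
    have hA2 : ∑ a, ∑ p, ∑ q, Yv a * dg q a p * v p * v q
        = ∑ a, ∑ p, ∑ q, Yv a * dg p a q * v p * v q := by
      refine (sum_swap23 _).trans ?_
      exact Finset.sum_congr rfl fun a _ => Finset.sum_congr rfl fun p _ =>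
        Finset.sum_congr rfl fun q _ => by ring
    rw [hA2]; ring
  have hRHS : ∑ a, ∑ b, H a b * v a * v b
      = (∑ a, ∑ p, ∑ q, Yv a * dg a p q * v p * v q)
        + (∑ a, ∑ b, ∑ c, gv a b * dY c a * v c * v b)
        + (∑ a, ∑ b, ∑ c, gv a b * dY c a * v c * v b) := by
    have e5 : ∀ a b : Fin n, H a b * v a * v b
        = (∑ c, Yv c * dg c a b * v a * v b) + (∑ c, gv c b * dY a c * v a * v b)
          + (∑ c, gv a c * dY b c * v a * v b) := by
      intro a b
      rw [hH, add_mul, add_mul, add_mul, add_mul, Finset.sum_mul, Finset.sum_mul,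
        Finset.sum_mul, Finset.sum_mul, Finset.sum_mul, Finset.sum_mul]
    simp only [e5, Finset.sum_add_distrib]
    have hR1 : ∑ a, ∑ b, ∑ c, Yv c * dg c a b * v a * v b
        = ∑ a, ∑ p, ∑ q, Yv a * dg a p q * v p * v q := by
      refine Eq.symm ((sum_rot2 (fun a p q => Yv a * dg a p q * v p * v q)).trans ?_)
      rfl
    have hR2 : ∑ a, ∑ b, ∑ c, gv c b * dY a c * v a * v b
        = ∑ a, ∑ b, ∑ c, gv a b * dY c a * v c * v b := by
      refine Eq.symm ((sum_swap13 (fun a b c => gv a b * dY c a * v c * v b)).trans ?_)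
      rfl
    have hR3 : ∑ a, ∑ b, ∑ c, gv a c * dY b c * v a * v b
        = ∑ a, ∑ b, ∑ c, gv a b * dY c a * v c * v b := by
      have step : ∑ a, ∑ b, ∑ c, gv a c * dY b c * v a * v b
          = ∑ a, ∑ b, ∑ c, gv c a * dY b c * v b * v a :=
        Finset.sum_congr rfl fun a _ => Finset.sum_congr rfl fun b _ =>
          Finset.sum_congr rfl fun c _ => by rw [hsym a c]; ring
      rw [step]
      refine Eq.symm ((sum_rot2 (fun a b c => gv a b * dY c a * v c * v b)).trans ?_)
      rfl
    rw [hR1, hR2, hR3]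
  rw [hG1, hG3, hRHS]; ring

lemma LB_alg (Gm : Fin n → Fin n → Fin n → ℝ) (H : Fin n → Fin n → ℝ)
    (dH : Fin n → Fin n → Fin n → ℝ) (v w : Fin n → ℝ)
    (hw : ∀ a, w a = - ∑ p, ∑ q, Gm a p q * v p * v q)
    (hdH : ∀ m a b, dH m a b = (∑ ν, Gm ν m a * H ν b) + (∑ ν, Gm ν m b * H a ν)) :
    ∑ a, ∑ b, (((∑ c, dH c a b * v c) * v a + H a b * w a) * v b + (H a b * v a) * w b)
      = 0 := by
  have e1 : ∀ a b : Fin n, ((∑ c, dH c a b * v c) * v a + H a b * w a) * v b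
        + (H a b * v a) * w b
      = ((∑ c, ∑ ν, Gm ν c a * H ν b * v c * v a * v b)
          + (∑ c, ∑ ν, Gm ν c b * H a ν * v c * v a * v b))
        + ((- ∑ p, ∑ q, H a b * Gm a p q * v p * v q * v b)
          + (- ∑ p, ∑ q, H a b * Gm b p q * v p * v q * v a)) := by
    intro a b
    have h2 : (∑ c, dH c a b * v c) * v a * v b
        = (∑ c, ∑ ν, Gm ν c a * H ν b * v c * v a * v b)
          + (∑ c, ∑ ν, Gm ν c b * H a ν * v c * v a * v b) := by
      rw [Finset.sum_mul, Finset.sum_mul, ← Finset.sum_add_distrib]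
      refine Finset.sum_congr rfl fun c _ => ?_
      rw [hdH, add_mul, add_mul, add_mul, Finset.sum_mul, Finset.sum_mul,
        Finset.sum_mul, Finset.sum_mul, Finset.sum_mul, Finset.sum_mul]
    have h3 : H a b * w a * v b = - ∑ p, ∑ q, H a b * Gm a p q * v p * v q * v b := by
      rw [hw, mul_neg, neg_mul, neg_inj, Finset.mul_sum, Finset.sum_mul]
      refine Finset.sum_congr rfl fun p _ => ?_
      rw [Finset.mul_sum, Finset.sum_mul]
      exact Finset.sum_congr rfl fun q _ => by ring
    have h4 : (H a b * v a) * w b = - ∑ p, ∑ q, H a b * Gm b p q * v p * v q * v a := by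
      rw [hw, mul_neg, neg_inj, Finset.mul_sum]
      refine Finset.sum_congr rfl fun p _ => ?_
      rw [Finset.mul_sum]
      exact Finset.sum_congr rfl fun q _ => by ring
    rw [← h2, ← h3, ← h4]; ring
  simp only [e1, Finset.sum_add_distrib, Finset.sum_neg_distrib]
  have key1 : (∑ a, ∑ b, ∑ c, ∑ ν, Gm ν c a * H ν b * v c * v a * v b)
      = ∑ a, ∑ b, ∑ p, ∑ q, H a b * Gm a p q * v p * v q * v b := by
    rw [sum_swap14 (fun a b c ν => Gm ν c a * H ν b * v c * v a * v b)]
    refine Finset.sum_congr rfl fun ν _ => Finset.sum_congr rfl fun b _ =>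
      Finset.sum_congr rfl fun c _ => Finset.sum_congr rfl fun a _ => by ring
  have key2 : (∑ a, ∑ b, ∑ c, ∑ ν, Gm ν c b * H a ν * v c * v a * v b)
      = ∑ a, ∑ b, ∑ p, ∑ q, H a b * Gm b p q * v p * v q * v a := by
    rw [sum_swap24 (fun a b c ν => Gm ν c b * H a ν * v c * v a * v b)]
    refine Finset.sum_congr rfl fun a _ => Finset.sum_congr rfl fun ν _ =>
      Finset.sum_congr rfl fun c _ => Finset.sum_congr rfl fun b _ => by ring
  rw [key1, key2]; ring

lemma pd_contDiff {f : (Fin n → ℝ) → ℝ} (hf : ContDiff ℝ (⊤ : ℕ∞) f) (i : Fin n) :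
    ContDiff ℝ (⊤ : ℕ∞) (pd f i) := by
  unfold pd
  exact (hf.fderiv_right (by simp)).clm_apply contDiff_const

lemma hasDerivAt_comp_curve {u : ℝ → Fin n → ℝ} (hu : ContDiff ℝ (⊤ : ℕ∞) u)
    {F : (Fin n → ℝ) → ℝ} (hF : ContDiff ℝ (⊤ : ℕ∞) F) (s : ℝ) :
    HasDerivAt (fun t => F (u t)) (∑ c, pd F c (u s) * vel u c s) s := by
  have hu' : HasDerivAt u (deriv u s) s := (hu.differentiable (by simp) s).hasDerivAt
  have hF' : HasFDerivAt F (fderiv ℝ F (u s)) (u s) :=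
    (hF.differentiable (by simp) (u s)).hasFDerivAt
  have h := hF'.comp_hasDerivAt s hu'
  have hvel : ∀ c, vel u c s = deriv u s c := fun c =>
    (hasDerivAt_pi.mp hu' c).deriv
  convert h using 1
  case e'_4 => rfl
  case e'_5 => rfl
  case e'_8 => rfl
  have hbasis : deriv u s = ∑ c, (deriv u s c) • (Pi.single c (1:ℝ) : Fin n → ℝ) := by
    ext j
    simp [Finset.sum_apply, Pi.single_apply]
  rw [hbasis, map_sum]
  refine Finset.sum_congr rfl fun c _ => ?_
  rw [map_smul, hvel c]
  simp [pd, smul_eq_mul, mul_comm]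

end Helpers

/-- for a vector field `Y` with `h = L_Y g` covariantly constant (an affine
vector field), `Q₂ = g_{ab} Y^a u̇^b − (s/2) h_{ab} u̇^a u̇^b` is constant along affinely
parametrized geodesics. -/
theorem affine_second_conservation {n : ℕ}
    (g ginv : (Fin n → ℝ) → Fin n → Fin n → ℝ)
    (hg : ∀ a b, ContDiff ℝ (⊤ : ℕ∞) (fun x => g x a b))
    (hsym : ∀ x a b, g x a b = g x b a)
    (hinv : ∀ x a b, (∑ c, g x a c * ginv x c b) = if a = b then (1:ℝ) else 0)
    (Y : (Fin n → ℝ) → Fin n → ℝ) (hY : ∀ a, ContDiff ℝ (⊤ : ℕ∞) (fun x => Y x a))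
    (hpar : ∀ (x : Fin n → ℝ) (m a b : Fin n),
      pd (fun y => LieG g Y y a b) m x - (∑ ν, Γ ginv g ν m a x * LieG g Y x ν b)
        - (∑ ν, Γ ginv g ν m b x * LieG g Y x a ν) = 0)
    (u : ℝ → Fin n → ℝ) (hu : ContDiff ℝ (⊤ : ℕ∞) u)
    (hgeo : IsGeodesic ginv g u) :
    ∀ s t : ℝ,
      (∑ a, ∑ b, g (u s) a b * Y (u s) a * vel u b s)
          - (s/2) * (∑ a, ∑ b, LieG g Y (u s) a b * vel u a s * vel u b s)
        = (∑ a, ∑ b, g (u t) a b * Y (u t) a * vel u b t)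
          - (t/2) * (∑ a, ∑ b, LieG g Y (u t) a b * vel u a t * vel u b t) := by
  have hLie : ∀ a b, ContDiff ℝ (⊤ : ℕ∞) (fun x => LieG g Y x a b) := by
    intro a b
    unfold LieG
    refine ContDiff.add (ContDiff.add ?_ ?_) ?_
    · exact ContDiff.sum fun c _ => (hY c).mul (pd_contDiff (hg a b) c)
    · exact ContDiff.sum fun c _ => (hg c b).mul (pd_contDiff (hY c) a)
    · exact ContDiff.sum fun c _ => (hg a c).mul (pd_contDiff (hY c) b)
  have hvels : ∀ a, Differentiable ℝ (vel u a) := by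
    intro a
    have h1 : ContDiff ℝ ∞ (fun t => u t a) := (contDiff_pi.mp hu a).of_le (by simp)
    exact ((contDiff_infty_iff_deriv.mp h1).2).differentiable (by simp)
  have key : ∀ r : ℝ, HasDerivAt (fun τ =>
      (∑ a, ∑ b, g (u τ) a b * Y (u τ) a * vel u b τ)
        - τ/2 * (∑ a, ∑ b, LieG g Y (u τ) a b * vel u a τ * vel u b τ)) 0 r := by
    intro r
    have hgd : ∀ a b, HasDerivAt (fun t => g (u t) a b)
        (∑ c, pd (fun y => g y a b) c (u r) * vel u c r) r :=
      fun a b => hasDerivAt_comp_curve hu (hg a b) r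
    have hYd : ∀ a, HasDerivAt (fun t => Y (u t) a)
        (∑ c, pd (fun y => Y y a) c (u r) * vel u c r) r :=
      fun a => hasDerivAt_comp_curve hu (hY a) r
    have hHd : ∀ a b, HasDerivAt (fun t => LieG g Y (u t) a b)
        (∑ c, pd (fun y => LieG g Y y a b) c (u r) * vel u c r) r :=
      fun a b => hasDerivAt_comp_curve hu (hLie a b) r
    have hveld : ∀ a, HasDerivAt (vel u a) (deriv (vel u a) r) r :=
      fun a => (hvels a r).hasDerivAt
    have hA : HasDerivAt (fun t => ∑ a, ∑ b, g (u t) a b * Y (u t) a * vel u b t)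
        (∑ a, ∑ b, (((∑ c, pd (fun y => g y a b) c (u r) * vel u c r) * Y (u r) a
            + g (u r) a b * (∑ c, pd (fun y => Y y a) c (u r) * vel u c r)) * vel u b r
          + (g (u r) a b * Y (u r) a) * deriv (vel u b) r)) r :=
      HasDerivAt.fun_sum fun a _ => HasDerivAt.fun_sum fun b _ =>
        ((hgd a b).fun_mul (hYd a)).fun_mul (hveld b)
    have hB : HasDerivAt (fun t => ∑ a, ∑ b, LieG g Y (u t) a b * vel u a t * vel u b t)
        (∑ a, ∑ b, (((∑ c, pd (fun y => LieG g Y y a b) c (u r) * vel u c r) * vel u a r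
            + LieG g Y (u r) a b * deriv (vel u a) r) * vel u b r
          + (LieG g Y (u r) a b * vel u a r) * deriv (vel u b) r)) r :=
      HasDerivAt.fun_sum fun a _ => HasDerivAt.fun_sum fun b _ =>
        ((hHd a b).fun_mul (hveld a)).fun_mul (hveld b)
    have hs2 : HasDerivAt (fun τ : ℝ => τ/2) (1/2 : ℝ) r := by
      simpa using (hasDerivAt_id r).div_const 2
    have hQ := hA.fun_sub (hs2.fun_mul hB)
    have hw : ∀ a, deriv (vel u a) r
        = - ∑ p, ∑ q, Γ ginv g a p q (u r) * vel u p r * vel u q r := by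
      intro a
      have h := hgeo r a
      linarith
    have hdH : ∀ m a b, pd (fun y => LieG g Y y a b) m (u r)
        = (∑ ν, Γ ginv g ν m a (u r) * LieG g Y (u r) ν b)
          + (∑ ν, Γ ginv g ν m b (u r) * LieG g Y (u r) a ν) := by
      intro m a b
      have h := hpar (u r) m a b
      linarith
    have LA' : ∑ a, ∑ b, (((∑ c, pd (fun y => g y a b) c (u r) * vel u c r) * Y (u r) a
            + g (u r) a b * (∑ c, pd (fun y => Y y a) c (u r) * vel u c r)) * vel u b r
          + (g (u r) a b * Y (u r) a) * deriv (vel u b) r)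
        = (1/2) * (∑ a, ∑ b, LieG g Y (u r) a b * vel u a r * vel u b r) :=
      LA_alg (fun a b => g (u r) a b) (fun a b => ginv (u r) a b)
        (fun a b c => Γ ginv g a b c (u r))
        (fun m a b => pd (fun y => g y a b) m (u r)) (fun a => Y (u r) a)
        (fun m c => pd (fun y => Y y c) m (u r))
        (fun a => vel u a r) (fun a => deriv (vel u a) r)
        (fun a b => LieG g Y (u r) a b)
        (fun a b => hsym (u r) a b) (fun a b => hinv (u r) a b)
        (fun a b c => rfl) hw (fun a b => rfl)
    have LB' : ∑ a, ∑ b, (((∑ c, pd (fun y => LieG g Y y a b) c (u r) * vel u c r) * vel u a r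
            + LieG g Y (u r) a b * deriv (vel u a) r) * vel u b r
          + (LieG g Y (u r) a b * vel u a r) * deriv (vel u b) r) = 0 :=
      LB_alg (fun a b c => Γ ginv g a b c (u r))
        (fun a b => LieG g Y (u r) a b)
        (fun m a b => pd (fun y => LieG g Y y a b) m (u r))
        (fun a => vel u a r) (fun a => deriv (vel u a) r) hw hdH
    convert hQ using 1
    case e'_4 => rfl
    case e'_5 => rfl
    beta_reduce
    rw [LA', LB']
    ring
  intro s t
  exact is_const_of_deriv_eq_zero (fun r => (key r).differentiableAt)
    (fun r => (key r).deriv) s t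
end
end

section
/- For the metric g = 2 dw dv + g_{ij}(w,x) dx^i dx^j on ℝⁿ, the vector field Y = w ∂_v is a proper affine vector field: L_Y Γ = 0 (equivalently ∇_a∇_b Y^c = R^c_{bad}Y^d), and L_Y g = 2 dw⊗dw = 2 k_♭ ⊗ k_♭ where k = ∂_v, which is not a constant multiple of g. -/
open scoped BigOperators

noncomputable section

variable {ι : Type*}

set_option linter.unusedSectionVars false

section Aux
variable [Fintype ι] [DecidableEq ι]

lemma pd_const (c : ℝ) (i : ι) (x : ι → ℝ) : pd (fun _ => c) i x = 0 := by
  simp [pd]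

lemma pd_proj (j i : ι) (x : ι → ℝ) :
    pd (fun y => y j) i x = if i = j then 1 else 0 := by
  have h : (fun y : ι → ℝ => y j)
      = (ContinuousLinearMap.proj j : ((ι → ℝ)) →L[ℝ] ℝ) := rfl
  rw [pd, h, ContinuousLinearMap.fderiv]
  simp [Pi.single_apply, eq_comm]

lemma fderiv_translate {f : (ι → ℝ) → ℝ} {c : ι → ℝ} (h : ∀ y, f (y + c) = f y)
    (x : ι → ℝ) : fderiv ℝ f (x + c) = fderiv ℝ f x := by
  have h' : ∀ y, f (y + -c) = f y := by
    intro y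
    rw [← h (y + -c)]
    simp
  by_cases hd : DifferentiableAt ℝ f (x + c)
  · have hT : HasFDerivAt (fun y : ι → ℝ => y + c)
        (ContinuousLinearMap.id ℝ (ι → ℝ)) x := (hasFDerivAt_id x).add_const c
    have hcomp := (hd.hasFDerivAt.comp x hT)
    have heq : (f ∘ fun y => y + c) = f := funext h
    rw [heq, ContinuousLinearMap.comp_id] at hcomp
    exact hcomp.fderiv.symm
  · have hd' : ¬ DifferentiableAt ℝ f x := by
      intro hx
      apply hd
      have hT : DifferentiableAt ℝ (fun y : ι → ℝ => y + -c) (x + c) :=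
        (differentiable_id.add_const (-c)).differentiableAt
      have hx' : DifferentiableAt ℝ f ((fun y : ι → ℝ => y + -c) (x + c)) := by
        simpa using hx
      have := hx'.comp (x + c) hT
      have heq : (f ∘ fun y : ι → ℝ => y + -c) = f := funext h'
      rwa [heq] at this
    rw [fderiv_zero_of_not_differentiableAt hd, fderiv_zero_of_not_differentiableAt hd']

lemma fderiv_dir_zero {f : (ι → ℝ) → ℝ} {x v0 : ι → ℝ}
    (h : ∀ t : ℝ, f (x + t • v0) = f x) : fderiv ℝ f x v0 = 0 := by
  by_cases hd : DifferentiableAt ℝ f x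
  · have hL : HasDerivAt (fun t : ℝ => x + t • v0) v0 0 := by
      simpa using ((hasDerivAt_id (0:ℝ)).smul_const v0).const_add x
    have h1 : HasDerivAt (fun t : ℝ => f (x + t • v0)) (fderiv ℝ f x v0) 0 := by
      have hat : HasFDerivAt f (fderiv ℝ f x) (x + (0:ℝ) • v0) := by
        simpa using hd.hasFDerivAt
      exact hat.comp_hasDerivAt 0 hL
    have h2 : HasDerivAt (fun t : ℝ => f (x + t • v0)) 0 0 := by
      have heq : (fun t : ℝ => f (x + t • v0)) = fun _ => f x := funext h
      rw [heq]; exact hasDerivAt_const 0 (f x)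
    exact h1.unique h2
  · rw [fderiv_zero_of_not_differentiableAt hd]; rfl

lemma const_line_of_fderiv {f : (ι → ℝ) → ℝ} (hf : Differentiable ℝ f) {v0 : ι → ℝ}
    (h : ∀ y, fderiv ℝ f y v0 = 0) (x : ι → ℝ) (t : ℝ) : f (x + t • v0) = f x := by
  have key : ∀ s : ℝ, HasDerivAt (fun t : ℝ => f (x + t • v0)) 0 s := by
    intro s
    have hL : HasDerivAt (fun t : ℝ => x + t • v0) v0 s := by
      simpa using ((hasDerivAt_id s).smul_const v0).const_add x
    have := (hf (x + s • v0)).hasFDerivAt.comp_hasDerivAt s hL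
    rw [h] at this
    exact this
  have := is_const_of_deriv_eq_zero (f := fun t : ℝ => f (x + t • v0))
    (fun s => (key s).differentiableAt) (fun s => (key s).deriv) t 0
  simpa using this

end Aux

/-- for `g = 2 dw dv + g_{ij}(w,x) dx^i dx^j`, the vector field `Y = w ∂_v`
is a proper affine vector field: `L_Y Γ = 0`, `L_Y g = 2 dw ⊗ dw = 2 k_♭ ⊗ k_♭`, and
`L_Y g` is not a constant multiple of `g`. -/
theorem pp_wave_proper_affine {m : ℕ}
    (g ginv : ((Fin 2 ⊕ Fin m) → ℝ) → (Fin 2 ⊕ Fin m) → (Fin 2 ⊕ Fin m) → ℝ)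
    (hg : ∀ a b, ContDiff ℝ (⊤ : ℕ∞) (fun x => g x a b))
    (hsym : ∀ x a b, g x a b = g x b a)
    (hinv : ∀ x a b, (∑ c, g x a c * ginv x c b) = if a = b then (1:ℝ) else 0)
    (hww : ∀ x, g x (Sum.inl 0) (Sum.inl 0) = 0)
    (hwv : ∀ x, g x (Sum.inl 0) (Sum.inl 1) = 1)
    (hvv : ∀ x, g x (Sum.inl 1) (Sum.inl 1) = 0)
    (hwi : ∀ x i, g x (Sum.inl 0) (Sum.inr i) = 0)
    (hvi : ∀ x i, g x (Sum.inl 1) (Sum.inr i) = 0)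
    (hvind : ∀ x a b, pd (fun y => g y a b) (Sum.inl 1) x = 0)
    (hpos : ∀ x, Matrix.PosDef (Matrix.of fun i j : Fin m => g x (Sum.inr i) (Sum.inr j))) :
    (∀ (x : (Fin 2 ⊕ Fin m) → ℝ) (c a b : Fin 2 ⊕ Fin m),
        LieΓ ginv g (fun y k => if k = Sum.inl 1 then y (Sum.inl 0) else 0) c a b x = 0) ∧
    (∀ (x : (Fin 2 ⊕ Fin m) → ℝ) (a b : Fin 2 ⊕ Fin m),
        LieG g (fun y k => if k = Sum.inl 1 then y (Sum.inl 0) else 0) x a b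
          = 2 * (if a = Sum.inl 0 ∧ b = Sum.inl 0 then 1 else 0)) ∧
    ¬ ∃ c : ℝ, ∀ (x : (Fin 2 ⊕ Fin m) → ℝ) (a b : Fin 2 ⊕ Fin m),
        LieG g (fun y k => if k = Sum.inl 1 then y (Sum.inl 0) else 0) x a b = c * g x a b := by
  classical
  set W : Fin 2 ⊕ Fin m := Sum.inl 0 with hW
  set V : Fin 2 ⊕ Fin m := Sum.inl 1 with hV
  set eV : (Fin 2 ⊕ Fin m) → ℝ := Pi.single V 1 with heV
  -- g with a v index is a constant function of y
  have gv : ∀ (y : (Fin 2 ⊕ Fin m) → ℝ) c, g y V c = if c = W then 1 else 0 := by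
    intro y c
    rcases c with c | i
    · fin_cases c
      · rw [hsym]; simp [hW, hV, hwv y]; exact hwv y
      · simp [hV, hW, hvv y]; exact hvv y
    · simp [hV, hW, hvi y i]; exact hvi y i
  have gcv : ∀ (y : (Fin 2 ⊕ Fin m) → ℝ) c, g y c V = if c = W then 1 else 0 := by
    intro y c; rw [hsym]; exact gv y c
  have pdgv : ∀ (c0 b : Fin 2 ⊕ Fin m) x, pd (fun y => g y V c0) b x = 0 := by
    intro c0 b x
    have h : (fun y => g y V c0) = fun _ => (if c0 = W then (1:ℝ) else 0) :=
      funext fun y => gv y c0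
    rw [h, pd_const]
  have pdgcv : ∀ (c0 b : Fin 2 ⊕ Fin m) x, pd (fun y => g y c0 V) b x = 0 := by
    intro c0 b x
    have h : (fun y => g y c0 V) = fun _ => (if c0 = W then (1:ℝ) else 0) :=
      funext fun y => gcv y c0
    rw [h, pd_const]
  -- g is constant along v-lines
  have gconst : ∀ a b x (t : ℝ), g (x + t • eV) a b = g x a b := by
    intro a b x t
    refine const_line_of_fderiv ((hg a b).differentiable (by simp)) (fun y => ?_) x t
    exact hvind y a b
  have pdgconst : ∀ a b d x (t : ℝ),
      pd (fun y => g y a b) d (x + t • eV) = pd (fun y => g y a b) d x := by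
    intro a b d x t
    unfold pd
    rw [fderiv_translate (fun y => gconst a b y t)]
  -- ginv is the matrix inverse, hence also constant along v-lines
  have hNinv : ∀ x, (Matrix.of fun a b => ginv x a b)
      = (Matrix.of fun a b => g x a b)⁻¹ := by
    intro x
    refine (Matrix.inv_eq_right_inv ?_).symm
    ext a b
    simpa [Matrix.mul_apply, Matrix.one_apply] using hinv x a b
  have ginvconst : ∀ a b x (t : ℝ), ginv (x + t • eV) a b = ginv x a b := by
    intro a b x t
    have h1 : (Matrix.of fun a b => ginv (x + t • eV) a b)
        = (Matrix.of fun a b => ginv x a b) := by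
      rw [hNinv, hNinv]
      congr 1
      ext a b
      exact gconst a b x t
    exact congrFun (congrFun h1 a) b
  have Γconst : ∀ c a b x (t : ℝ), Γ ginv g c a b (x + t • eV) = Γ ginv g c a b x := by
    intro c a b x t
    simp only [Γ]
    congr 1
    refine Finset.sum_congr rfl fun d _ => ?_
    rw [ginvconst, pdgconst, pdgconst, pdgconst]
  have pdΓv : ∀ c a b x, pd (Γ ginv g c a b) V x = 0 := by
    intro c a b x
    exact fderiv_dir_zero (fun t => Γconst c a b x t)
  -- the w-row of ginv
  have ginvw : ∀ x b, ginv x W b = if V = b then 1 else 0 := by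
    intro x b
    have h := hinv x V b
    simp only [gv, ite_mul, one_mul, zero_mul, Finset.sum_ite_eq', Finset.mem_univ,
      if_true] at h
    exact h
  -- Γ^w = 0
  have Γw : ∀ b c x, Γ ginv g W b c x = 0 := by
    intro b c x
    simp only [Γ, ginvw, ite_mul, one_mul, zero_mul, Finset.sum_ite_eq, Finset.mem_univ,
      if_true]
    rw [pdgv, pdgv, hvind]
    ring
  -- Γ with a lower v index vanishes
  have Γvm : ∀ c b x, Γ ginv g c V b x = 0 := by
    intro c b x
    simp only [Γ]
    rw [Finset.sum_eq_zero]
    · ring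
    intro d _
    rw [hvind, pdgcv, pdgv]
    ring
  have Γvr : ∀ c a x, Γ ginv g c a V x = 0 := by
    intro c a x
    simp only [Γ]
    rw [Finset.sum_eq_zero]
    · ring
    intro d _
    rw [hvind, pdgcv, pdgcv]
    ring
  -- derivative of Y
  have pdY : ∀ (c d : Fin 2 ⊕ Fin m) x,
      pd (fun y => if c = V then y W else 0) d x
        = if c = V ∧ d = W then 1 else 0 := by
    intro c d x
    by_cases hc : c = V
    · simp only [hc, if_true, true_and]
      rw [pd_proj]
    · simp [hc, pd_const]
  -- the Lie derivative of the metric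
  have hLieG : ∀ (x : (Fin 2 ⊕ Fin m) → ℝ) (a b : Fin 2 ⊕ Fin m),
      LieG g (fun y k => if k = Sum.inl 1 then y (Sum.inl 0) else 0) x a b
        = 2 * (if a = Sum.inl 0 ∧ b = Sum.inl 0 then 1 else 0) := by
    intro x a b
    simp only [LieG, ← hW, ← hV]
    have T1 : (∑ c, (if c = V then x W else 0) * pd (fun y => g y a b) c x) = 0 := by
      rw [Finset.sum_eq_zero]
      intro c _
      by_cases hc : c = V
      · rw [hc, hvind]; ring
      · simp [hc]
    have T2 : (∑ c, g x c b * pd (fun y => if c = V then y W else 0) a x)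
        = if a = W then (if b = W then 1 else 0) else 0 := by
      have : ∀ c, pd (fun y => if c = V then y W else 0) a x
          = if c = V ∧ a = W then 1 else 0 := fun c => pdY c a x
      simp only [this, mul_ite, mul_one, mul_zero]
      by_cases ha : a = W
      · simp only [ha, and_true, Finset.sum_ite_eq', Finset.mem_univ, if_true]
        rw [gv]
      · simp [ha]
    have T3 : (∑ c, g x a c * pd (fun y => if c = V then y W else 0) b x)
        = if b = W then (if a = W then 1 else 0) else 0 := by
      have : ∀ c, pd (fun y => if c = V then y W else 0) b x
          = if c = V ∧ b = W then 1 else 0 := fun c => pdY c b x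
      simp only [this, mul_ite, mul_one, mul_zero]
      by_cases hb : b = W
      · simp only [hb, and_true, Finset.sum_ite_eq', Finset.mem_univ, if_true]
        rw [gcv]
      · simp [hb]
    rw [T1, T2, T3]
    by_cases ha : a = W <;> by_cases hb : b = W <;> simp [ha, hb] <;> norm_num
  refine ⟨?_, hLieG, ?_⟩
  · -- L_Y Γ = 0
    intro x c a b
    simp only [LieΓ, ← hW, ← hV]
    have T1 : (∑ d, (if d = V then x W else 0) * pd (Γ ginv g c a b) d x) = 0 := by
      rw [Finset.sum_eq_zero]
      intro d _
      by_cases hd : d = V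
      · rw [hd, pdΓv]; ring
      · simp [hd]
    have T2 : (∑ d, Γ ginv g d a b x * pd (fun y => if c = V then y W else 0) d x) = 0 := by
      rw [Finset.sum_eq_zero]
      intro d _
      rw [pdY]
      by_cases h : c = V ∧ d = W
      · rw [if_pos h, h.2, Γw]; ring
      · rw [if_neg h]; ring
    have T3 : (∑ d, Γ ginv g c d b x * pd (fun y => if d = V then y W else 0) a x) = 0 := by
      rw [Finset.sum_eq_zero]
      intro d _
      rw [pdY]
      by_cases h : d = V ∧ a = W
      · rw [if_pos h, h.1, Γvm]; ring
      · rw [if_neg h]; ring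
    have T4 : (∑ d, Γ ginv g c a d x * pd (fun y => if d = V then y W else 0) b x) = 0 := by
      rw [Finset.sum_eq_zero]
      intro d _
      rw [pdY]
      by_cases h : d = V ∧ b = W
      · rw [if_pos h, h.1, Γvr]; ring
      · rw [if_neg h]; ring
    have T5 : pd (fun y => pd (fun z => if c = V then z W else 0) b y) a x = 0 := by
      have h : (fun y => pd (fun z => if c = V then z W else 0) b y)
          = fun _ => (if c = V ∧ b = W then (1:ℝ) else 0) :=
        funext fun y => pdY c b y
      rw [h, pd_const]
    rw [T1, T2, T3, T4, T5]
    ring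
  · -- not a constant multiple of g
    rintro ⟨cst, hcst⟩
    have h1 := hcst 0 (Sum.inl 0) (Sum.inl 0)
    rw [hLieG, hww] at h1
    simp at h1
end
end

section
/- Let L(x, ẋ) = −½ g_{αβ}(x) ẋ^α ẋ^β be the geodesic Lagrangian and let Y be a vector field with h = L_Y g covariantly constant. Define the generalized (evolutionary) vector field v₁ with characteristic σ^α = h^α_β(x) ẋ^β. Then the prolonged action of v₁ on L is a total derivative: pr v₁ (L) = D(−½ h_{αβ} ẋ^α ẋ^β), where D is the total derivative operator. Concretely, as an identity of functions of (x, ẋ, ẍ): −g_{αβ} ẋ^α (h^β_{σ,μ} ẋ^μ ẋ^σ + h^β_σ ẍ^σ) − ½ g_{αβ,γ} h^γ_σ ẋ^σ ẋ^α ẋ^β = −½ h_{αβ,γ} ẋ^γ ẋ^α ẋ^β − h_{αβ} ẋ^α ẍ^β. -/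
open scoped BigOperators

noncomputable section

variable {ι : Type*}

namespace SymmAux

variable {n : ℕ}

lemma pd_sum {f : Fin n → (Fin n → ℝ) → ℝ} {i : Fin n} {x : Fin n → ℝ}
    (hf : ∀ j, DifferentiableAt ℝ (f j) x) :
    pd (fun y => ∑ j, f j y) i x = ∑ j, pd (f j) i x := by
  unfold pd
  rw [fderiv_fun_sum (fun j _ => hf j)]
  simp

lemma pd_mul {f g : (Fin n → ℝ) → ℝ} {i : Fin n} {x : Fin n → ℝ}
    (hf : DifferentiableAt ℝ f x) (hg : DifferentiableAt ℝ g x) :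
    pd (fun y => f y * g y) i x = pd f i x * g x + f x * pd g i x := by
  unfold pd
  rw [fderiv_fun_mul hf hg]
  simp
  ring

lemma contDiff_det {M : (Fin n → ℝ) → Matrix (Fin n) (Fin n) ℝ}
    (hM : ∀ a b, ContDiff ℝ (⊤ : ℕ∞) (fun y => M y a b)) :
    ContDiff ℝ (⊤ : ℕ∞) (fun y => (M y).det) := by
  simp only [Matrix.det_apply]
  apply ContDiff.sum
  intro σ _
  have h1 : (fun y => Equiv.Perm.sign σ • ∏ i, M y (σ i) i)
      = fun y => ((Equiv.Perm.sign σ : ℤ) : ℝ) * ∏ i, M y (σ i) i := by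
    funext y; simp [Units.smul_def, zsmul_eq_mul]
  rw [h1]
  exact contDiff_const.mul (contDiff_prod fun i _ => hM (σ i) i)

lemma ginv_contDiff (g ginv : (Fin n → ℝ) → Fin n → Fin n → ℝ)
    (hg : ∀ a b, ContDiff ℝ (⊤ : ℕ∞) (fun x => g x a b))
    (hinv : ∀ x a b, (∑ c, g x a c * ginv x c b) = if a = b then (1:ℝ) else 0) :
    ∀ a b, ContDiff ℝ (⊤ : ℕ∞) (fun x => ginv x a b) := by
  intro a b
  set A : (Fin n → ℝ) → Matrix (Fin n) (Fin n) ℝ := fun y => Matrix.of (g y) with hA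
  have hAB : ∀ y, A y * Matrix.of (ginv y) = 1 := by
    intro y; ext i j
    simpa [hA, Matrix.mul_apply, Matrix.one_apply] using hinv y i j
  have hdet : ∀ y, (A y).det ≠ 0 := by
    intro y h0
    have h2 := Matrix.det_mul (A y) (Matrix.of (ginv y))
    rw [hAB y, Matrix.det_one, h0, zero_mul] at h2
    exact one_ne_zero h2
  have hrepr : ∀ y, ginv y a b = ((A y).det)⁻¹ * (A y).adjugate a b := by
    intro y
    have h1 : (A y)⁻¹ = Matrix.of (ginv y) := Matrix.inv_eq_right_inv (hAB y)
    have h2 : (A y)⁻¹ = Ring.inverse (A y).det • (A y).adjugate := Matrix.inv_def _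
    have h3 := congrArg (fun M => M a b) (h1.symm.trans h2)
    simpa [Ring.inverse_eq_inv', Matrix.smul_apply, smul_eq_mul] using h3
  have hadj : ContDiff ℝ (⊤ : ℕ∞) (fun y => (A y).adjugate a b) := by
    simp only [Matrix.adjugate_apply]
    apply contDiff_det
    intro i j
    rcases eq_or_ne i b with hib | hib
    · simpa [Matrix.updateRow_apply, hib] using (contDiff_const :
        ContDiff ℝ (⊤ : ℕ∞) (fun _ : Fin n → ℝ => (Pi.single a (1:ℝ) : Fin n → ℝ) j))
    · simpa [hA, Matrix.updateRow_apply, hib] using hg i j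
  have hdetc : ContDiff ℝ (⊤ : ℕ∞) (fun y => (A y).det) := contDiff_det (fun c d => hg c d)
  have hfin : ContDiff ℝ (⊤ : ℕ∞) (fun y => ((A y).det)⁻¹ * (A y).adjugate a b) :=
    (hdetc.inv hdet).mul hadj
  have he : (fun y => ginv y a b) = fun y => ((A y).det)⁻¹ * (A y).adjugate a b :=
    funext hrepr
  rw [he]; exact hfin

lemma sum3_swap23 (f : Fin n → Fin n → Fin n → ℝ) :
    (∑ a, ∑ b, ∑ c, f a b c) = ∑ a, ∑ b, ∑ c, f a c b :=
  Finset.sum_congr rfl fun _ _ => Finset.sum_comm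

lemma sum3_swap12 (f : Fin n → Fin n → Fin n → ℝ) :
    (∑ a, ∑ b, ∑ c, f a b c) = ∑ a, ∑ b, ∑ c, f b a c :=
  Finset.sum_comm

lemma sum4_swap12 (f : Fin n → Fin n → Fin n → Fin n → ℝ) :
    (∑ a, ∑ b, ∑ c, ∑ d, f a b c d) = ∑ a, ∑ b, ∑ c, ∑ d, f b a c d :=
  Finset.sum_comm

lemma sum4_swap23 (f : Fin n → Fin n → Fin n → Fin n → ℝ) :
    (∑ a, ∑ b, ∑ c, ∑ d, f a b c d) = ∑ a, ∑ b, ∑ c, ∑ d, f a c b d :=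
  Finset.sum_congr rfl fun _ _ => Finset.sum_comm

lemma sum4_flat (f : Fin n → Fin n → Fin n → Fin n → ℝ) :
    (∑ a, ∑ b, ∑ c, ∑ d, f a b c d)
      = ∑ z : Fin n × Fin n × Fin n × Fin n, f z.1 z.2.1 z.2.2.1 z.2.2.2 := by
  rw [Fintype.sum_prod_type]
  refine Finset.sum_congr rfl fun a _ => ?_
  rw [Fintype.sum_prod_type]
  refine Finset.sum_congr rfl fun b _ => ?_
  rw [Fintype.sum_prod_type]

lemma sum4_swap13 (f : Fin n → Fin n → Fin n → Fin n → ℝ) :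
    (∑ a, ∑ b, ∑ c, ∑ d, f a b c d) = ∑ a, ∑ b, ∑ c, ∑ d, f c b a d := by
  rw [sum4_flat, sum4_flat]
  exact Fintype.sum_equiv
    ⟨fun z => (z.2.2.1, z.2.1, z.1, z.2.2.2), fun z => (z.2.2.1, z.2.1, z.1, z.2.2.2),
      fun z => rfl, fun z => rfl⟩ _ _ (fun z => rfl)

/-- `∑ f c a d b = ∑ f a b c d` reindexing. -/
lemma sum4_perm1 (f : Fin n → Fin n → Fin n → Fin n → ℝ) :
    (∑ a, ∑ b, ∑ c, ∑ d, f c a d b) = ∑ a, ∑ b, ∑ c, ∑ d, f a b c d := by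
  rw [sum4_flat, sum4_flat]
  exact Fintype.sum_equiv
    ⟨fun z => (z.2.2.1, z.1, z.2.2.2, z.2.1), fun z => (z.2.1, z.2.2.2, z.1, z.2.2.1),
      fun z => rfl, fun z => rfl⟩ _ _ (fun z => rfl)

section core
variable (g ginv h : (Fin n → ℝ) → Fin n → Fin n → ℝ)

lemma HgH (hinv : ∀ x a b, (∑ c, g x a c * ginv x c b) = if a = b then (1:ℝ) else 0)
    (y : Fin n → ℝ) (α σ : Fin n) :
    (∑ β, g y α β * (∑ γ, ginv y β γ * h y γ σ)) = h y α σ := by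
  calc (∑ β, g y α β * (∑ γ, ginv y β γ * h y γ σ))
      = ∑ β, ∑ γ, g y α β * ginv y β γ * h y γ σ := by
        refine Finset.sum_congr rfl fun β _ => ?_
        rw [Finset.mul_sum]
        exact Finset.sum_congr rfl fun γ _ => by ring
    _ = ∑ γ, ∑ β, g y α β * ginv y β γ * h y γ σ := Finset.sum_comm
    _ = ∑ γ, (∑ β, g y α β * ginv y β γ) * h y γ σ := by
        refine Finset.sum_congr rfl fun γ _ => ?_
        rw [Finset.sum_mul]
    _ = ∑ γ, (if α = γ then (1:ℝ) else 0) * h y γ σ := by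
        refine Finset.sum_congr rfl fun γ _ => ?_
        rw [hinv y α γ]
    _ = h y α σ := by simp

lemma cGamma (hinv : ∀ x a b, (∑ c, g x a c * ginv x c b) = if a = b then (1:ℝ) else 0)
    (x : Fin n → ℝ) (a b c : Fin n) :
    (∑ ν, g x a ν * Γ ginv g ν b c x)
      = (1/2) * (pd (fun y => g y a c) b x + pd (fun y => g y a b) c x
          - pd (fun y => g y b c) a x) := by
  calc (∑ ν, g x a ν * Γ ginv g ν b c x)
      = ∑ ν, ∑ d, (1/2) * (g x a ν * ginv x ν d *
          (pd (fun y => g y d c) b x + pd (fun y => g y d b) c x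
            - pd (fun y => g y b c) d x)) := by
        refine Finset.sum_congr rfl fun ν _ => ?_
        unfold Γ
        rw [Finset.mul_sum, Finset.mul_sum]
        exact Finset.sum_congr rfl fun d _ => by ring
    _ = ∑ d, ∑ ν, (1/2) * (g x a ν * ginv x ν d *
          (pd (fun y => g y d c) b x + pd (fun y => g y d b) c x
            - pd (fun y => g y b c) d x)) := Finset.sum_comm
    _ = ∑ d, (1/2) * ((∑ ν, g x a ν * ginv x ν d) *
          (pd (fun y => g y d c) b x + pd (fun y => g y d b) c x
            - pd (fun y => g y b c) d x)) := by
        refine Finset.sum_congr rfl fun d _ => ?_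
        rw [Finset.sum_mul, Finset.mul_sum]
    _ = ∑ d, (1/2) * ((if a = d then (1:ℝ) else 0) *
          (pd (fun y => g y d c) b x + pd (fun y => g y d b) c x
            - pd (fun y => g y b c) d x)) := by
        refine Finset.sum_congr rfl fun d _ => ?_
        rw [hinv x a d]
    _ = (1/2) * (pd (fun y => g y a c) b x + pd (fun y => g y a b) c x
          - pd (fun y => g y b c) a x) := by
        simp [mul_ite, ite_mul, Finset.sum_ite_eq]

end core

end SymmAux

/-- with `h` covariantly constant, the prolonged action of the generalized
vector field with characteristic `σ^α = h^α_β ẋ^β` on the geodesic Lagrangian is the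
total derivative `D(−½ h_{αβ} ẋ^α ẋ^β)`; concretely, for all `x, ẋ=p, ẍ=q`:
`−g_{αβ} p^α (h^β_{σ,μ} p^μ p^σ + h^β_σ q^σ) − ½ g_{αβ,γ} h^γ_σ p^σ p^α p^β
  = −½ h_{αβ,γ} p^γ p^α p^β − h_{αβ} p^α q^β`. -/
theorem generalized_symmetry_identity {n : ℕ}
    (g ginv h : (Fin n → ℝ) → Fin n → Fin n → ℝ)
    (hg : ∀ a b, ContDiff ℝ (⊤ : ℕ∞) (fun x => g x a b))
    (hsym : ∀ x a b, g x a b = g x b a)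
    (hinv : ∀ x a b, (∑ c, g x a c * ginv x c b) = if a = b then (1:ℝ) else 0)
    (hh : ∀ a b, ContDiff ℝ (⊤ : ℕ∞) (fun x => h x a b))
    (hsymh : ∀ x a b, h x a b = h x b a)
    (hpar : ∀ (x : Fin n → ℝ) (m a b : Fin n),
      pd (fun y => h y a b) m x - (∑ ν, Γ ginv g ν m a x * h x ν b)
        - (∑ ν, Γ ginv g ν m b x * h x a ν) = 0) :
    ∀ (x p q : Fin n → ℝ),
      -(∑ α, ∑ β, g x α β * p α *
          ((∑ μ, ∑ σ, pd (fun y => ∑ γ, ginv y β γ * h y γ σ) μ x * p μ * p σ)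
            + ∑ σ, (∑ γ, ginv x β γ * h x γ σ) * q σ))
        - (1/2) * (∑ α, ∑ β, ∑ γ, ∑ σ,
            pd (fun y => g y α β) γ x * (∑ δ, ginv x γ δ * h x δ σ) * p σ * p α * p β)
      = -(1/2) * (∑ α, ∑ β, ∑ γ, pd (fun y => h y α β) γ x * p γ * p α * p β)
          - ∑ α, ∑ β, h x α β * p α * q β := by
  intro x p q
  have hgd : ∀ a b, DifferentiableAt ℝ (fun y => g y a b) x :=
    fun a b => ((hg a b).differentiable (by simp)) x
  have hginv := SymmAux.ginv_contDiff g ginv hg hinv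
  have hHd : ∀ β σ, DifferentiableAt ℝ (fun y => ∑ γ, ginv y β γ * h y γ σ) x :=
    fun β σ => DifferentiableAt.fun_sum fun γ _ =>
      (((hginv β γ).differentiable (by simp)) x).fun_mul (((hh γ σ).differentiable (by simp)) x)
  -- product rule for the contraction h = g · (ginv·h)
  have gdH : ∀ α σ μ, (∑ β, g x α β * pd (fun y => ∑ γ, ginv y β γ * h y γ σ) μ x)
      = pd (fun y => h y α σ) μ x
        - ∑ β, pd (fun y => g y α β) μ x * (∑ γ, ginv x β γ * h x γ σ) := by
    intro α σ μ
    have hfun : (fun y => h y α σ) = fun y => ∑ β, g y α β * (∑ γ, ginv y β γ * h y γ σ) :=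
      funext fun y => (SymmAux.HgH g ginv h hinv y α σ).symm
    have hprod : pd (fun y => h y α σ) μ x
        = ∑ β, (pd (fun y => g y α β) μ x * (∑ γ, ginv x β γ * h x γ σ)
            + g x α β * pd (fun y => ∑ γ, ginv y β γ * h y γ σ) μ x) := by
      rw [hfun]
      refine (SymmAux.pd_sum (f := fun β y => g y α β * (∑ γ, ginv y β γ * h y γ σ))
        (fun β => (hgd α β).mul (hHd β σ))).trans ?_
      exact Finset.sum_congr rfl fun β _ => SymmAux.pd_mul (hgd α β) (hHd β σ)
    rw [hprod, Finset.sum_add_distrib]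
    ring
  have hpar' : ∀ a b m, pd (fun y => h y a b) m x
      = (∑ ν, Γ ginv g ν m a x * h x ν b) + (∑ ν, Γ ginv g ν m b x * h x a ν) := by
    intro a b m
    have := hpar x m a b
    linarith
  have pdGsym : ∀ a b c, pd (fun y => g y a b) c x = pd (fun y => g y b a) c x := by
    intro a b c
    have e : (fun y => g y a b) = fun y => g y b a := funext fun y => hsym y a b
    rw [e]
  -- split the prolongation sum
  have hsplit : (∑ α, ∑ β, g x α β * p α *
        ((∑ μ, ∑ σ, pd (fun y => ∑ γ, ginv y β γ * h y γ σ) μ x * p μ * p σ)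
          + ∑ σ, (∑ γ, ginv x β γ * h x γ σ) * q σ))
      = (∑ α, ∑ β, g x α β * p α *
          (∑ μ, ∑ σ, pd (fun y => ∑ γ, ginv y β γ * h y γ σ) μ x * p μ * p σ))
        + (∑ α, ∑ β, g x α β * p α * (∑ σ, (∑ γ, ginv x β γ * h x γ σ) * q σ)) := by
    rw [← Finset.sum_add_distrib]
    refine Finset.sum_congr rfl fun α _ => ?_
    rw [← Finset.sum_add_distrib]
    exact Finset.sum_congr rfl fun β _ => by ring
  -- the q-part
  have hq : (∑ α, ∑ β, g x α β * p α * (∑ σ, (∑ γ, ginv x β γ * h x γ σ) * q σ))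
      = ∑ α, ∑ β, h x α β * p α * q β := by
    calc (∑ α, ∑ β, g x α β * p α * (∑ σ, (∑ γ, ginv x β γ * h x γ σ) * q σ))
        = ∑ α, ∑ β, ∑ σ, g x α β * (∑ γ, ginv x β γ * h x γ σ) * (p α * q σ) := by
          refine Finset.sum_congr rfl fun α _ => Finset.sum_congr rfl fun β _ => ?_
          rw [Finset.mul_sum]
          exact Finset.sum_congr rfl fun σ _ => by ring
      _ = ∑ α, ∑ σ, ∑ β, g x α β * (∑ γ, ginv x β γ * h x γ σ) * (p α * q σ) :=
          Finset.sum_congr rfl fun α _ => Finset.sum_comm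
      _ = ∑ α, ∑ σ, (∑ β, g x α β * (∑ γ, ginv x β γ * h x γ σ)) * (p α * q σ) := by
          refine Finset.sum_congr rfl fun α _ => Finset.sum_congr rfl fun σ _ => ?_
          rw [Finset.sum_mul]
      _ = ∑ α, ∑ σ, h x α σ * (p α * q σ) := by
          refine Finset.sum_congr rfl fun α _ => Finset.sum_congr rfl fun σ _ => ?_
          rw [SymmAux.HgH g ginv h hinv x α σ]
      _ = ∑ α, ∑ β, h x α β * p α * q β := by
          refine Finset.sum_congr rfl fun α _ => Finset.sum_congr rfl fun β _ => ?_
          ring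
  -- the ẍ-free part of the prolongation
  have hB : (∑ α, ∑ β, g x α β * p α *
        (∑ μ, ∑ σ, pd (fun y => ∑ γ, ginv y β γ * h y γ σ) μ x * p μ * p σ))
      = (∑ a, ∑ b, ∑ c, pd (fun y => h y a c) b x * (p a * p b * p c))
        - (∑ a, ∑ b, ∑ c, ∑ d, pd (fun y => g y a d) b x * (∑ γ, ginv x d γ * h x γ c)
            * (p a * p b * p c)) := by
    calc (∑ α, ∑ β, g x α β * p α *
          (∑ μ, ∑ σ, pd (fun y => ∑ γ, ginv y β γ * h y γ σ) μ x * p μ * p σ))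
        = ∑ α, ∑ β, ∑ μ, ∑ σ, g x α β * pd (fun y => ∑ γ, ginv y β γ * h y γ σ) μ x
            * (p α * p μ * p σ) := by
          refine Finset.sum_congr rfl fun α _ => Finset.sum_congr rfl fun β _ => ?_
          rw [Finset.mul_sum]
          refine Finset.sum_congr rfl fun μ _ => ?_
          rw [Finset.mul_sum]
          exact Finset.sum_congr rfl fun σ _ => by ring
      _ = ∑ α, ∑ μ, ∑ σ, ∑ β, g x α β * pd (fun y => ∑ γ, ginv y β γ * h y γ σ) μ x
            * (p α * p μ * p σ) := by
          refine Finset.sum_congr rfl fun α _ => ?_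
          refine Eq.trans (SymmAux.sum3_swap12 (fun b m s => g x α b *
            pd (fun y => ∑ γ, ginv y b γ * h y γ s) m x * (p α * p m * p s))) ?_
          exact SymmAux.sum3_swap23 (fun m b s => g x α b *
            pd (fun y => ∑ γ, ginv y b γ * h y γ s) m x * (p α * p m * p s))
      _ = ∑ α, ∑ μ, ∑ σ, (∑ β, g x α β * pd (fun y => ∑ γ, ginv y β γ * h y γ σ) μ x)
            * (p α * p μ * p σ) := by
          refine Finset.sum_congr rfl fun α _ => Finset.sum_congr rfl fun μ _ =>
            Finset.sum_congr rfl fun σ _ => ?_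
          rw [Finset.sum_mul]
      _ = ∑ α, ∑ μ, ∑ σ, (pd (fun y => h y α σ) μ x
            - ∑ β, pd (fun y => g y α β) μ x * (∑ γ, ginv x β γ * h x γ σ))
            * (p α * p μ * p σ) := by
          refine Finset.sum_congr rfl fun α _ => Finset.sum_congr rfl fun μ _ =>
            Finset.sum_congr rfl fun σ _ => ?_
          rw [gdH α σ μ]
      _ = (∑ a, ∑ b, ∑ c, pd (fun y => h y a c) b x * (p a * p b * p c))
          - (∑ a, ∑ b, ∑ c, ∑ d, pd (fun y => g y a d) b x * (∑ γ, ginv x d γ * h x γ c)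
              * (p a * p b * p c)) := by
          rw [← Finset.sum_sub_distrib]
          refine Finset.sum_congr rfl fun a _ => ?_
          rw [← Finset.sum_sub_distrib]
          refine Finset.sum_congr rfl fun b _ => ?_
          rw [← Finset.sum_sub_distrib]
          refine Finset.sum_congr rfl fun c _ => ?_
          rw [sub_mul, Finset.sum_mul]
  -- reindex the dh-cube
  have hD : (∑ a, ∑ b, ∑ c, pd (fun y => h y a c) b x * (p a * p b * p c))
      = ∑ α, ∑ β, ∑ γ, pd (fun y => h y α β) γ x * p γ * p α * p β := by
    refine Eq.trans (SymmAux.sum3_swap23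
      (fun a b c => pd (fun y => h y a c) b x * (p a * p b * p c))) ?_
    refine Finset.sum_congr rfl fun a _ => Finset.sum_congr rfl fun b _ =>
      Finset.sum_congr rfl fun c _ => ?_
    ring
  -- the key identity from covariant constancy of h
  have hSg : (∑ α, ∑ β, ∑ γ, pd (fun y => h y α β) γ x * p γ * p α * p β)
      = (∑ a, ∑ b, ∑ c, ∑ d, Γ ginv g d c a x * h x d b * (p c * p a * p b))
        + (∑ a, ∑ b, ∑ c, ∑ d, Γ ginv g d c b x * h x a d * (p c * p a * p b)) := by
    rw [← Finset.sum_add_distrib]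
    refine Finset.sum_congr rfl fun a _ => ?_
    rw [← Finset.sum_add_distrib]
    refine Finset.sum_congr rfl fun b _ => ?_
    rw [← Finset.sum_add_distrib]
    refine Finset.sum_congr rfl fun c _ => ?_
    rw [hpar' a b c, add_mul, add_mul, add_mul]
    congr 1
    · rw [Finset.sum_mul, Finset.sum_mul, Finset.sum_mul]
      exact Finset.sum_congr rfl fun d _ => by ring
    · rw [Finset.sum_mul, Finset.sum_mul, Finset.sum_mul]
      exact Finset.sum_congr rfl fun d _ => by ring
  -- the two Γ·h terms agree
  have hT2 : (∑ a, ∑ b, ∑ c, ∑ d, Γ ginv g d c b x * h x a d * (p c * p a * p b))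
      = ∑ a, ∑ b, ∑ c, ∑ d, Γ ginv g d c a x * h x d b * (p c * p a * p b) := by
    refine Eq.trans (SymmAux.sum4_swap12
      (fun a b c d => Γ ginv g d c b x * h x a d * (p c * p a * p b))) ?_
    refine Finset.sum_congr rfl fun a _ => Finset.sum_congr rfl fun b _ =>
      Finset.sum_congr rfl fun c _ => Finset.sum_congr rfl fun d _ => ?_
    rw [hsymh x b d]
    ring
  -- evaluate 2·T1 using metric compatibility
  have h2T1 : 2 * (∑ a, ∑ b, ∑ c, ∑ d, Γ ginv g d c a x * h x d b * (p c * p a * p b))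
      = (∑ a, ∑ b, ∑ c, ∑ d, pd (fun y => g y d a) c x * (∑ γ, ginv x d γ * h x γ b)
            * (p c * p a * p b))
        + (∑ a, ∑ b, ∑ c, ∑ d, pd (fun y => g y d c) a x * (∑ γ, ginv x d γ * h x γ b)
            * (p c * p a * p b))
        - (∑ a, ∑ b, ∑ c, ∑ d, pd (fun y => g y c a) d x * (∑ γ, ginv x d γ * h x γ b)
            * (p c * p a * p b)) := by
    have step1 : (∑ a, ∑ b, ∑ c, ∑ d, Γ ginv g d c a x * h x d b * (p c * p a * p b))
        = ∑ a, ∑ b, ∑ c, ∑ d, (1/2) * ((pd (fun y => g y d a) c x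
            + pd (fun y => g y d c) a x - pd (fun y => g y c a) d x)
            * ((∑ γ, ginv x d γ * h x γ b) * (p c * p a * p b))) := by
      calc (∑ a, ∑ b, ∑ c, ∑ d, Γ ginv g d c a x * h x d b * (p c * p a * p b))
          = ∑ a, ∑ b, ∑ c, ∑ d,
              Γ ginv g d c a x * (∑ μ, g x d μ * (∑ γ, ginv x μ γ * h x γ b))
                * (p c * p a * p b) := by
            refine Finset.sum_congr rfl fun a _ => Finset.sum_congr rfl fun b _ =>
              Finset.sum_congr rfl fun c _ => Finset.sum_congr rfl fun d _ => ?_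
            rw [SymmAux.HgH g ginv h hinv x d b]
        _ = ∑ a, ∑ b, ∑ c, ∑ d, ∑ μ, Γ ginv g d c a x * g x d μ
              * (∑ γ, ginv x μ γ * h x γ b) * (p c * p a * p b) := by
            refine Finset.sum_congr rfl fun a _ => Finset.sum_congr rfl fun b _ =>
              Finset.sum_congr rfl fun c _ => Finset.sum_congr rfl fun d _ => ?_
            rw [Finset.mul_sum, Finset.sum_mul]
            exact Finset.sum_congr rfl fun μ _ => by ring
        _ = ∑ a, ∑ b, ∑ c, ∑ μ, ∑ d, Γ ginv g d c a x * g x d μ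
              * (∑ γ, ginv x μ γ * h x γ b) * (p c * p a * p b) := by
            refine Finset.sum_congr rfl fun a _ => Finset.sum_congr rfl fun b _ =>
              Finset.sum_congr rfl fun c _ => ?_
            exact Finset.sum_comm
        _ = ∑ a, ∑ b, ∑ c, ∑ μ, (∑ d, g x μ d * Γ ginv g d c a x)
              * ((∑ γ, ginv x μ γ * h x γ b) * (p c * p a * p b)) := by
            refine Finset.sum_congr rfl fun a _ => Finset.sum_congr rfl fun b _ =>
              Finset.sum_congr rfl fun c _ => Finset.sum_congr rfl fun μ _ => ?_
            rw [Finset.sum_mul]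
            refine Finset.sum_congr rfl fun d _ => ?_
            rw [hsym x d μ]
            ring
        _ = ∑ a, ∑ b, ∑ c, ∑ μ, (1/2) * ((pd (fun y => g y μ a) c x
              + pd (fun y => g y μ c) a x - pd (fun y => g y c a) μ x)
              * ((∑ γ, ginv x μ γ * h x γ b) * (p c * p a * p b))) := by
            refine Finset.sum_congr rfl fun a _ => Finset.sum_congr rfl fun b _ =>
              Finset.sum_congr rfl fun c _ => Finset.sum_congr rfl fun μ _ => ?_
            rw [SymmAux.cGamma g ginv hinv x μ c a]
            ring
    rw [step1]
    rw [← Finset.sum_add_distrib, ← Finset.sum_sub_distrib, Finset.mul_sum]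
    refine Finset.sum_congr rfl fun a _ => ?_
    rw [← Finset.sum_add_distrib, ← Finset.sum_sub_distrib, Finset.mul_sum]
    refine Finset.sum_congr rfl fun b _ => ?_
    rw [← Finset.sum_add_distrib, ← Finset.sum_sub_distrib, Finset.mul_sum]
    refine Finset.sum_congr rfl fun c _ => ?_
    rw [← Finset.sum_add_distrib, ← Finset.sum_sub_distrib, Finset.mul_sum]
    refine Finset.sum_congr rfl fun d _ => ?_
    ring
  -- U2 = U1
  have hU2 : (∑ a, ∑ b, ∑ c, ∑ d, pd (fun y => g y d c) a x * (∑ γ, ginv x d γ * h x γ b)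
        * (p c * p a * p b))
      = ∑ a, ∑ b, ∑ c, ∑ d, pd (fun y => g y d a) c x * (∑ γ, ginv x d γ * h x γ b)
        * (p c * p a * p b) := by
    refine Eq.trans (SymmAux.sum4_swap13 (fun a b c d => pd (fun y => g y d c) a x
      * (∑ γ, ginv x d γ * h x γ b) * (p c * p a * p b))) ?_
    refine Finset.sum_congr rfl fun a _ => Finset.sum_congr rfl fun b _ =>
      Finset.sum_congr rfl fun c _ => Finset.sum_congr rfl fun d _ => ?_
    ring
  -- U1 equals the A2 sum from hB
  have hU1 : (∑ a, ∑ b, ∑ c, ∑ d, pd (fun y => g y a d) b x * (∑ γ, ginv x d γ * h x γ c)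
        * (p a * p b * p c))
      = ∑ a, ∑ b, ∑ c, ∑ d, pd (fun y => g y d a) c x * (∑ γ, ginv x d γ * h x γ b)
        * (p c * p a * p b) := by
    refine Eq.trans (SymmAux.sum4_swap23 (fun a b c d => pd (fun y => g y a d) b x
      * (∑ γ, ginv x d γ * h x γ c) * (p a * p b * p c))) ?_
    refine Finset.sum_congr rfl fun a _ => Finset.sum_congr rfl fun b _ =>
      Finset.sum_congr rfl fun c _ => Finset.sum_congr rfl fun d _ => ?_
    rw [pdGsym a d c]
    ring
  -- U3 equals the A3 sum from the goal
  have hU3 : (∑ a, ∑ b, ∑ c, ∑ d, pd (fun y => g y c a) d x * (∑ γ, ginv x d γ * h x γ b)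
        * (p c * p a * p b))
      = ∑ α, ∑ β, ∑ γ, ∑ σ, pd (fun y => g y α β) γ x * (∑ δ, ginv x γ δ * h x δ σ)
        * p σ * p α * p β := by
    refine Eq.trans ?_ (SymmAux.sum4_perm1 (fun a b c d => pd (fun y => g y a b) c x
      * (∑ δ, ginv x c δ * h x δ d) * p d * p a * p b))
    refine Finset.sum_congr rfl fun a _ => Finset.sum_congr rfl fun b _ =>
      Finset.sum_congr rfl fun c _ => Finset.sum_congr rfl fun d _ => ?_
    ring
  linarith [hsplit, hq, hB, hD, hSg, hT2, h2T1, hU2, hU1, hU3]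
end
end

section
/- For the metric g = δ_{AB} dρ^A dρ^B + 2 dw dv + g_{ij}(w,z) dz^i dz^j and the intermixing affine vector field Y = w ∂_{ρ¹}, the two quantities Q₁ = ρ̇¹ẇ and Q₂ = wρ̇¹ − sρ̇¹ẇ are constant along every affinely parametrized geodesic. -/
open scoped BigOperators

noncomputable section

variable {ι : Type*}

lemma pd_eq_zero_of_const [Fintype ι] [DecidableEq ι] {f : (ι → ℝ) → ℝ} {k : ℝ}
    (h : ∀ y, f y = k) (i : ι) (x : ι → ℝ) : pd f i x = 0 := by
  have hf : f = fun _ => k := funext h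
  simp [pd, hf]

/-- for the metric `g = δ_{AB} dρ^A dρ^B + 2 dw dv + g_{ij}(w,z) dz^i dz^j`
and the intermixing affine vector field `Y = w ∂_{ρ¹}`, the quantities `Q₁ = ρ̇¹ ẇ` and
`Q₂ = w ρ̇¹ − s ρ̇¹ ẇ` are constant along every affinely parametrized geodesic.
Coordinates: `Sum.inl A` are the `ρ^A`, `Sum.inr (Sum.inl 0) = w`,
`Sum.inr (Sum.inl 1) = v`, `Sum.inr (Sum.inr i)` are the `z^i`. -/
theorem intermixing_first_integrals {p q : ℕ}
    (g ginv : ((Fin (p+1) ⊕ (Fin 2 ⊕ Fin q)) → ℝ) →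
      (Fin (p+1) ⊕ (Fin 2 ⊕ Fin q)) → (Fin (p+1) ⊕ (Fin 2 ⊕ Fin q)) → ℝ)
    (hg : ∀ a b, ContDiff ℝ (⊤ : ℕ∞) (fun x => g x a b))
    (hsym : ∀ x a b, g x a b = g x b a)
    (hinv : ∀ x a b, (∑ c, g x a c * ginv x c b) = if a = b then (1:ℝ) else 0)
    (hρρ : ∀ x A B, g x (Sum.inl A) (Sum.inl B) = if A = B then 1 else 0)
    (hρo : ∀ x A b, (∀ B, b ≠ Sum.inl B) → g x (Sum.inl A) b = 0)
    (hww : ∀ x, g x (Sum.inr (Sum.inl 0)) (Sum.inr (Sum.inl 0)) = 0)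
    (hwv : ∀ x, g x (Sum.inr (Sum.inl 0)) (Sum.inr (Sum.inl 1)) = 1)
    (hvv : ∀ x, g x (Sum.inr (Sum.inl 1)) (Sum.inr (Sum.inl 1)) = 0)
    (hwz : ∀ x i, g x (Sum.inr (Sum.inl 0)) (Sum.inr (Sum.inr i)) = 0)
    (hvz : ∀ x i, g x (Sum.inr (Sum.inl 1)) (Sum.inr (Sum.inr i)) = 0)
    (hvind : ∀ x a b, pd (fun y => g y a b) (Sum.inr (Sum.inl 1)) x = 0)
    (hρind : ∀ x a b A, pd (fun y => g y a b) (Sum.inl A) x = 0)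
    (hpos : ∀ x, Matrix.PosDef
      (Matrix.of fun i j : Fin q => g x (Sum.inr (Sum.inr i)) (Sum.inr (Sum.inr j))))
    (u : ℝ → (Fin (p+1) ⊕ (Fin 2 ⊕ Fin q)) → ℝ) (hu : ContDiff ℝ (⊤ : ℕ∞) u)
    (hgeo : IsGeodesic ginv g u) :
    ∀ s t : ℝ,
      vel u (Sum.inl 0) s * vel u (Sum.inr (Sum.inl 0)) s
        = vel u (Sum.inl 0) t * vel u (Sum.inr (Sum.inl 0)) t ∧
      u s (Sum.inr (Sum.inl 0)) * vel u (Sum.inl 0) s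
          - s * (vel u (Sum.inl 0) s * vel u (Sum.inr (Sum.inl 0)) s)
        = u t (Sum.inr (Sum.inl 0)) * vel u (Sum.inl 0) t
          - t * (vel u (Sum.inl 0) t * vel u (Sum.inr (Sum.inl 0)) t) := by
  intro s t
  set w : Fin (p+1) ⊕ (Fin 2 ⊕ Fin q) := Sum.inr (Sum.inl 0) with hw
  set v : Fin (p+1) ⊕ (Fin 2 ⊕ Fin q) := Sum.inr (Sum.inl 1) with hv
  -- row of g on ρ-indices
  have grow : ∀ x A c, g x (Sum.inl A) c = if Sum.inl A = c then 1 else 0 := by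
    intro x A c
    rcases c with B | c
    · rw [hρρ]; simp
    · rw [hρo x A _ (by simp)]; simp
  -- row of ginv on ρ-indices
  have ginvrow : ∀ x A b, ginv x (Sum.inl A) b = if Sum.inl A = b then 1 else 0 := by
    intro x A b
    have h := hinv x (Sum.inl A) b
    have h2 : (∑ c, g x (Sum.inl A) c * ginv x c b) = ginv x (Sum.inl A) b := by
      simp [grow x A, ite_mul]
    exact h2.symm.trans h
  -- left inverse
  have hinv' : ∀ x a b, (∑ c, ginv x a c * g x c b) = if a = b then (1:ℝ) else 0 := by
    intro x a b
    have h1 : (Matrix.of (g x)) * (Matrix.of (ginv x)) = 1 := by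
      ext a b
      simpa [Matrix.mul_apply, Matrix.one_apply] using hinv x a b
    have h2 := mul_eq_one_comm.mp h1
    have h3 := congrFun (congrFun h2 a) b
    simpa [Matrix.mul_apply, Matrix.one_apply] using h3
  -- columns of g
  have gcolρ : ∀ x c B, g x c (Sum.inl B) = if c = Sum.inl B then 1 else 0 := by
    intro x c B
    rw [hsym, grow]
    exact if_congr eq_comm rfl rfl
  have gcolv : ∀ x c, g x c v = if c = w then 1 else 0 := by
    intro x c
    rcases c with A | c
    · rw [hρo x A _ (by simp)]; simp [hw]
    · rcases c with k | i
      · rcases (show k = 0 ∨ k = 1 by omega) with rfl | rfl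
        · rw [show g x (Sum.inr (Sum.inl 0)) v = 1 from hwv x]; simp [hw]
        · rw [show g x (Sum.inr (Sum.inl 1)) v = 0 from hvv x]; simp [hw]
      · rw [hsym, show g x v (Sum.inr (Sum.inr i)) = 0 from hvz x i]; simp [hw]
  have gcolw : ∀ x c, g x c w = if c = v then 1 else 0 := by
    intro x c
    rcases c with A | c
    · rw [hρo x A _ (by simp)]; simp [hv]
    · rcases c with k | i
      · rcases (show k = 0 ∨ k = 1 by omega) with rfl | rfl
        · rw [show g x (Sum.inr (Sum.inl 0)) w = 0 from hww x]; simp [hv]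
        · rw [hsym, show g x w (Sum.inr (Sum.inl 1)) = 1 from hwv x]; simp [hv]
      · rw [hsym, show g x w (Sum.inr (Sum.inr i)) = 0 from hwz x i]; simp [hv]
  have gvrow : ∀ x c, g x v c = if c = w then 1 else 0 := by
    intro x c; rw [hsym]; exact gcolv x c
  -- the w-row of ginv
  have ginvw : ∀ x d, ginv x w d = if d = v then 1 else 0 := by
    intro x d
    rcases d with B | d
    · have h := hinv' x w (Sum.inl B)
      have h2 : (∑ c, ginv x w c * g x c (Sum.inl B)) = ginv x w (Sum.inl B) := by
        simp [gcolρ x, mul_ite]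
      rw [h2] at h
      rw [h]; simp [hw, hv]
    · rcases d with k | j
      · rcases (show k = 0 ∨ k = 1 by omega) with rfl | rfl
        · -- ginv x w w = 0, from column v
          have h := hinv' x w v
          have h2 : (∑ c, ginv x w c * g x c v) = ginv x w w := by
            simp [gcolv x, mul_ite]
          rw [h2] at h
          rw [show (Sum.inr (Sum.inl 0) : Fin (p+1) ⊕ (Fin 2 ⊕ Fin q)) = w from rfl, h]
        · -- ginv x w v = 1, from column w
          have h := hinv' x w w
          have h2 : (∑ c, ginv x w c * g x c w) = ginv x w v := by
            simp [gcolw x, mul_ite]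
          rw [h2] at h
          rw [show (Sum.inr (Sum.inl 1) : Fin (p+1) ⊕ (Fin 2 ⊕ Fin q)) = v from rfl, h]
          simp
      · -- z-columns: use positive definiteness
        have key : ∀ j', (∑ i, ginv x w (Sum.inr (Sum.inr i))
            * g x (Sum.inr (Sum.inr i)) (Sum.inr (Sum.inr j'))) = 0 := by
          intro j'
          have h := hinv' x w (Sum.inr (Sum.inr j'))
          rw [if_neg (by simp [hw])] at h
          rw [Fintype.sum_sum_type] at h
          have hA : (∑ A, ginv x w (Sum.inl A) * g x (Sum.inl A) (Sum.inr (Sum.inr j'))) = 0 := by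
            apply Finset.sum_eq_zero; intro A _
            rw [hρo x A _ (by simp)]; ring
          rw [hA, zero_add, Fintype.sum_sum_type] at h
          have hk : (∑ k : Fin 2, ginv x w (Sum.inr (Sum.inl k))
              * g x (Sum.inr (Sum.inl k)) (Sum.inr (Sum.inr j'))) = 0 := by
            apply Finset.sum_eq_zero; intro k _
            rcases (show k = 0 ∨ k = 1 by omega) with rfl | rfl
            · rw [hwz x j']; ring
            · rw [hvz x j']; ring
          rw [hk, zero_add] at h
          exact h
        have hvv0 : (fun i => ginv x w (Sum.inr (Sum.inr i))) = (0 : Fin q → ℝ) := by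
          by_contra hne
          have hpd := (hpos x).dotProduct_mulVec_pos hne
          have hdot : dotProduct (star fun i => ginv x w (Sum.inr (Sum.inr i)))
              ((Matrix.of fun i j => g x (Sum.inr (Sum.inr i)) (Sum.inr (Sum.inr j))).mulVec
                (fun i => ginv x w (Sum.inr (Sum.inr i)))) = 0 := by
            simp only [star_trivial, dotProduct, Matrix.mulVec, Matrix.of_apply,
              Finset.mul_sum]
            rw [Finset.sum_comm]
            apply Finset.sum_eq_zero
            intro j' _
            have h1 : (∑ i, ginv x w (Sum.inr (Sum.inr i))
                * (g x (Sum.inr (Sum.inr i)) (Sum.inr (Sum.inr j'))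
                  * ginv x w (Sum.inr (Sum.inr j'))))
                = (∑ i, ginv x w (Sum.inr (Sum.inr i))
                    * g x (Sum.inr (Sum.inr i)) (Sum.inr (Sum.inr j')))
                  * ginv x w (Sum.inr (Sum.inr j')) := by
              rw [Finset.sum_mul]
              apply Finset.sum_congr rfl
              intro i _
              ring
            rw [h1, key j', zero_mul]
          rw [hdot] at hpd
          exact lt_irrefl _ hpd
        have hj := congrFun hvv0 j
        simp only [Pi.zero_apply] at hj
        rw [hj, if_neg (by simp [hv])]
  -- Christoffel symbols with upper ρ-index vanish
  have hΓρ : ∀ A b c x, Γ ginv g (Sum.inl A) b c x = 0 := by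
    intro A b c x
    rw [Γ]
    have hsum : (∑ d, ginv x (Sum.inl A) d *
        (pd (fun y => g y d c) b x + pd (fun y => g y d b) c x - pd (fun y => g y b c) d x))
        = pd (fun y => g y (Sum.inl A) c) b x + pd (fun y => g y (Sum.inl A) b) c x
          - pd (fun y => g y b c) (Sum.inl A) x := by
      simp [ginvrow x, ite_mul]
    rw [hsum, pd_eq_zero_of_const (fun y => grow y A c),
      pd_eq_zero_of_const (fun y => grow y A b), hρind]
    ring
  -- Christoffel symbols with upper w-index vanish
  have hΓw : ∀ b c x, Γ ginv g w b c x = 0 := by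
    intro b c x
    rw [Γ]
    have hsum : (∑ d, ginv x w d *
        (pd (fun y => g y d c) b x + pd (fun y => g y d b) c x - pd (fun y => g y b c) d x))
        = pd (fun y => g y v c) b x + pd (fun y => g y v b) c x
          - pd (fun y => g y b c) v x := by
      simp [ginvw x, ite_mul]
    rw [hsum, pd_eq_zero_of_const (fun y => gvrow y c),
      pd_eq_zero_of_const (fun y => gvrow y b), hvind]
    ring
  -- velocities are differentiable
  have hvd : ∀ a, Differentiable ℝ (vel u a) ∧ Differentiable ℝ (fun t => u t a) := by
    intro a
    have h1 : ContDiff ℝ ((⊤ : ℕ∞) : WithTop ℕ∞) (fun t => u t a) :=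
      (contDiff_pi.mp hu a).of_le (by simp)
    have h2 := contDiff_infty_iff_deriv.mp h1
    exact ⟨h2.2.differentiable (by simp), h2.1⟩
  -- accelerations vanish
  have hacc : ∀ a, (∀ b c x, Γ ginv g a b c x = 0) → ∀ r, deriv (vel u a) r = 0 := by
    intro a hZ r
    have h := hgeo r a
    simpa [hZ] using h
  have haccρ : ∀ r, deriv (vel u (Sum.inl 0)) r = 0 := hacc _ (hΓρ 0)
  have haccw : ∀ r, deriv (vel u w) r = 0 := hacc _ hΓw
  have hconstρ := is_const_of_deriv_eq_zero (hvd (Sum.inl 0)).1 haccρ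
  have hconstw := is_const_of_deriv_eq_zero (hvd w).1 haccw
  refine ⟨by rw [hconstρ s t, hconstw s t], ?_⟩
  -- second integral
  set F : ℝ → ℝ := fun r => u r w * vel u (Sum.inl 0) r
      - r * (vel u (Sum.inl 0) r * vel u w r) with hF
  have hdF : ∀ r, deriv F r = 0 := by
    intro r
    have h1 : HasDerivAt (vel u (Sum.inl 0)) 0 r := by
      have := ((hvd (Sum.inl 0)).1 r).hasDerivAt
      rwa [haccρ r] at this
    have h2 : HasDerivAt (vel u w) 0 r := by
      have := ((hvd w).1 r).hasDerivAt
      rwa [haccw r] at this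
    have h3 : HasDerivAt (fun t => u t w) (vel u w r) r := ((hvd w).2 r).hasDerivAt
    have hFd : HasDerivAt F (vel u w r * vel u (Sum.inl 0) r + u r w * 0
        - (1 * (vel u (Sum.inl 0) r * vel u w r)
          + r * (0 * vel u w r + vel u (Sum.inl 0) r * 0))) r :=
      (h3.mul h1).sub ((hasDerivAt_id r).mul (h1.mul h2))
    rw [hFd.deriv]; ring
  have hFdiff : Differentiable ℝ F := by
    apply Differentiable.sub
    · exact ((hvd w).2.mul (hvd (Sum.inl 0)).1)
    · exact (differentiable_id.mul ((hvd (Sum.inl 0)).1.mul (hvd w).1))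
  exact is_const_of_deriv_eq_zero hFdiff hdF s t
end
end
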